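/- If the step sizes (ρ_t)_{t≥1} are positive and nonincreasing, then for every t ≥ 1 the averaged primal iterate x̄_t = (1/t) Σ_{u=0}^{t−1} x_u and averaged dual candidate ȳ_t = (1/t) Σ_{u=0}^{t−1} y_u satisfy gap(x̄_t, ȳ_t) = f(A x̄_t) + σ(−Aᵀ ȳ_t) + f*(ȳ_t) ≤ δ²/(t ρ_t) + (R²/(2t)) Σ_{u=1}^t ρ_u. -/

import Mathlib

open scoped RealInnerProductSpace
open Finset

noncomputable section

/-- `y` is a subgradient of `f` at `z`. -/
def IsSubgrad {n : ℕ} (f : EuclideanSpace ℝ (Fin n) → ℝ)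
    (z y : EuclideanSpace ℝ (Fin n)) : Prop :=
  ∀ z', f z + ⟪y, z' - z⟫ ≤ f z'

/-- Bregman divergence of a differentiable function `h` with gradient `h'`. -/
def Dbreg {p : ℕ} (h : EuclideanSpace ℝ (Fin p) → ℝ)
    (h' : EuclideanSpace ℝ (Fin p) → EuclideanSpace ℝ (Fin p))
    (x₁ x₂ : EuclideanSpace ℝ (Fin p)) : ℝ :=
  h x₁ - h x₂ - ⟪x₁ - x₂, h' x₂⟫

/-- Fenchel conjugate of `f`, with values in `EReal`. -/
def fstarE {n : ℕ} (f : EuclideanSpace ℝ (Fin n) → ℝ)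
    (y : EuclideanSpace ℝ (Fin n)) : EReal :=
  ⨆ z, ((⟪y, z⟫ - f z : ℝ) : EReal)

/-!
Each mirror step is a constrained minimisation, so its first-order optimality condition together
with the three-point identity of the Bregman divergence, `1`-strong convexity of `h` and Young's
inequality yield the one-step bound
`⟪Aᵀ y_u, x_u - x⟫ ≤ (D(x, x_u) - D(x, x_{u+1})) / ρ_{u+1} + ρ_{u+1} R² / 2` for every `x ∈ K`.
Summing, with `D ≤ δ²` on `K` and nonincreasing steps, bounds the regret by
`δ² / ρ_t + (R² / 2) ∑ ρ_u`. Finally Jensen's inequality for `f (A x̄)`, the subgradient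
inequality for `f* (ȳ)` and a maximiser of `σ (-Aᵀ ȳ)` in `K` bound the gap of the averages by
the regret against that maximiser, divided by `t`.
-/

theorem StrongConvexOn.inner_add_sq_le_of_hasGradientAt {E : Type*} [NormedAddCommGroup E]
    [InnerProductSpace ℝ E] [CompleteSpace E] {φ : E → ℝ} {m : ℝ} {g x : E}
    (hφ : StrongConvexOn Set.univ m φ) (hg : HasGradientAt φ g x) (y : E) :
    ⟪g, y - x⟫ + m / 2 * ‖y - x‖ ^ 2 ≤ φ y - φ x := by
  set ψ : E → ℝ := fun z => φ z - m / 2 * ‖z‖ ^ 2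
  have hconv : ConvexOn ℝ Set.univ (ψ ∘ AffineMap.lineMap (k := ℝ) x y) := by
    simpa using (strongConvexOn_iff_convex.1 hφ).comp_affineMap (AffineMap.lineMap (k := ℝ) x y)
  have hline : HasDerivAt (AffineMap.lineMap (k := ℝ) x y : ℝ → E) (y - x) 0 :=
    AffineMap.hasDerivAt_lineMap
  have hderiv : HasDerivAt (ψ ∘ AffineMap.lineMap (k := ℝ) x y)
      (⟪g, y - x⟫ - m / 2 * (2 * ⟪x, y - x⟫)) 0 := by
    have hφline := HasFDerivAt.comp_hasDerivAt (0 : ℝ) (by simpa using hg.hasFDerivAt) hline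
    have hnorm := hline.norm_sq.const_mul (m / 2)
    simp only [AffineMap.lineMap_apply_zero] at hnorm
    simp only [InnerProductSpace.toDual_apply_apply] at hφline
    exact hφline.sub hnorm
  have hslope := hconv.le_slope_of_hasDerivAt (Set.mem_univ 0) (Set.mem_univ 1) zero_lt_one hderiv
  simp only [slope_def_field, Function.comp_apply, AffineMap.lineMap_apply_zero,
    AffineMap.lineMap_apply_one, ψ, sub_zero, div_one] at hslope
  have hy : y = x + (y - x) := by abel
  rw [hy, norm_add_sq_real, ← hy] at hslope
  linarith

section Bregman

variable {p : ℕ} {h : EuclideanSpace ℝ (Fin p) → ℝ}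
  {h' : EuclideanSpace ℝ (Fin p) → EuclideanSpace ℝ (Fin p)}

theorem sq_norm_sub_div_two_le_dbreg (hdiff : ∀ x, HasGradientAt h (h' x) x)
    (hsc : StrongConvexOn Set.univ 1 h) (x₁ x₂ : EuclideanSpace ℝ (Fin p)) :
    ‖x₁ - x₂‖ ^ 2 / 2 ≤ Dbreg h h' x₁ x₂ := by
  have := hsc.inner_add_sq_le_of_hasGradientAt (hdiff x₂) x₁
  rw [Dbreg, real_inner_comm]
  linarith

theorem dbreg_nonneg (hdiff : ∀ x, HasGradientAt h (h' x) x)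
    (hsc : StrongConvexOn Set.univ 1 h) (x₁ x₂ : EuclideanSpace ℝ (Fin p)) :
    0 ≤ Dbreg h h' x₁ x₂ :=
  (by positivity : (0 : ℝ) ≤ ‖x₁ - x₂‖ ^ 2 / 2).trans (sq_norm_sub_div_two_le_dbreg hdiff hsc x₁ x₂)

theorem dbreg_sub_dbreg_sub_dbreg (x x₀ x₁ : EuclideanSpace ℝ (Fin p)) :
    Dbreg h h' x x₀ - Dbreg h h' x x₁ - Dbreg h h' x₁ x₀ = ⟪h' x₁ - h' x₀, x - x₁⟫ := by
  simp only [Dbreg, inner_sub_left, inner_sub_right, real_inner_comm (h' x₀),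
    real_inner_comm (h' x₁)]
  ring

variable (h h') in
def mirrorObjective (ρ : ℝ) (x₀ g x : EuclideanSpace ℝ (Fin p)) : ℝ :=
  1 / ρ * Dbreg h h' x x₀ + ⟪x - x₀, g⟫

theorem hasFDerivAt_mirrorObjective (hdiff : ∀ x, HasGradientAt h (h' x) x)
    (ρ : ℝ) (x₀ g x : EuclideanSpace ℝ (Fin p)) :
    HasFDerivAt (mirrorObjective h h' ρ x₀ g)
      (InnerProductSpace.toDual ℝ _ ((1 / ρ) • (h' x - h' x₀) + g)) x := by
  have hinner : ∀ v, HasFDerivAt (fun z => ⟪z - x₀, v⟫) (InnerProductSpace.toDual ℝ _ v) x := by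
    intro v
    have hfun : (fun z => ⟪z - x₀, v⟫) = fun z => InnerProductSpace.toDual ℝ _ v z - ⟪v, x₀⟫ := by
      ext z
      rw [InnerProductSpace.toDual_apply_apply, inner_sub_left, real_inner_comm v,
        real_inner_comm v]
    rw [hfun]
    exact (InnerProductSpace.toDual ℝ _ v).hasFDerivAt.sub_const _
  have hbreg := ((hdiff x).hasFDerivAt.sub_const (h x₀)).sub (hinner (h' x₀))
  rw [map_add, map_smul, map_sub]
  exact (hbreg.const_mul (1 / ρ)).add (hinner g)

theorem inner_sub_le_of_isMinOn_mirrorObjective (hdiff : ∀ x, HasGradientAt h (h' x) x)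
    {K : Set (EuclideanSpace ℝ (Fin p))} (hK : Convex ℝ K) {ρ : ℝ}
    {x₀ x₁ g : EuclideanSpace ℝ (Fin p)} (hx₁ : x₁ ∈ K)
    (hmin : IsMinOn (mirrorObjective h h' ρ x₀ g) K x₁)
    {x : EuclideanSpace ℝ (Fin p)} (hx : x ∈ K) :
    ⟪g, x₁ - x⟫ ≤ (Dbreg h h' x x₀ - Dbreg h h' x x₁ - Dbreg h h' x₁ x₀) / ρ := by
  have hfermat := hmin.localize.hasFDerivWithinAt_nonneg
    (hasFDerivAt_mirrorObjective hdiff ρ x₀ g x₁).hasFDerivWithinAt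
    (sub_mem_posTangentConeAt_of_segment_subset (hK.segment_subset hx₁ hx))
  rw [InnerProductSpace.toDual_apply_apply, inner_add_left, real_inner_smul_left,
    one_div_mul_eq_div] at hfermat
  rw [dbreg_sub_dbreg_sub_dbreg, ← neg_sub x x₁, inner_neg_right]
  linarith

theorem mirror_step_inner_sub_le (hdiff : ∀ x, HasGradientAt h (h' x) x)
    (hsc : StrongConvexOn Set.univ 1 h) {K : Set (EuclideanSpace ℝ (Fin p))} (hK : Convex ℝ K)
    {ρ R : ℝ} (hρ : 0 < ρ) {x₀ x₁ g : EuclideanSpace ℝ (Fin p)} (hg : ‖g‖ ≤ R) (hx₁ : x₁ ∈ K)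
    (hmin : IsMinOn (mirrorObjective h h' ρ x₀ g) K x₁)
    {x : EuclideanSpace ℝ (Fin p)} (hx : x ∈ K) :
    ⟪g, x₀ - x⟫ ≤ (Dbreg h h' x x₀ - Dbreg h h' x x₁) / ρ + ρ * R ^ 2 / 2 := by
  have hopt := inner_sub_le_of_isMinOn_mirrorObjective hdiff hK hx₁ hmin hx
  have hstep := div_le_div_of_nonneg_right (sq_norm_sub_div_two_le_dbreg hdiff hsc x₁ x₀) hρ.le
  set a := ‖x₁ - x₀‖
  have hcs : ⟪g, x₀ - x₁⟫ ≤ R * a :=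
    calc ⟪g, x₀ - x₁⟫ ≤ ‖g‖ * ‖x₀ - x₁‖ := real_inner_le_norm _ _
      _ ≤ R * a := by rw [norm_sub_rev]; gcongr
  have hyoung : R * a ≤ a ^ 2 / 2 / ρ + ρ * R ^ 2 / 2 := by
    have hsq : 0 ≤ (a - ρ * R) ^ 2 / 2 / ρ := by positivity
    have hexpand : (a - ρ * R) ^ 2 / 2 / ρ = a ^ 2 / 2 / ρ + ρ * R ^ 2 / 2 - R * a := by
      field_simp
      ring
    linarith
  have hsplit : ⟪g, x₀ - x⟫ = ⟪g, x₀ - x₁⟫ + ⟪g, x₁ - x⟫ := by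
    rw [← inner_add_right, sub_add_sub_cancel]
  rw [sub_div, sub_div] at hopt
  rw [sub_div]
  linarith

end Bregman

theorem sum_range_sub_div_le {a ρ : ℕ → ℝ} {B : ℝ} (ha : ∀ u, 0 ≤ a u)
    (haB : ∀ u, a u ≤ B) (hρpos : ∀ u, 1 ≤ u → 0 < ρ u)
    (hρmono : ∀ u, 1 ≤ u → ρ (u + 1) ≤ ρ u) {t : ℕ} (ht : 1 ≤ t) :
    ∑ u ∈ range t, (a u - a (u + 1)) / ρ (u + 1) ≤ B / ρ t := by
  suffices key : ∑ u ∈ range t, (a u - a (u + 1)) / ρ (u + 1) ≤ (B - a t) / ρ t by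
    calc _ ≤ (B - a t) / ρ t := key
      _ ≤ B / ρ t := by gcongr; exacts [(hρpos t ht).le, by linarith [ha t]]
  induction t, ht using Nat.le_induction with
  | base =>
    rw [sum_range_one, zero_add]
    exact div_le_div_of_nonneg_right (by linarith [haB 0]) (hρpos 1 le_rfl).le
  | succ m hm ih =>
    have hgrow : (B - a m) / ρ m ≤ (B - a m) / ρ (m + 1) := by
      gcongr
      exacts [by linarith [haB m], hρpos (m + 1) (by omega), hρmono m hm]
    calc ∑ u ∈ range (m + 1), (a u - a (u + 1)) / ρ (u + 1)
        ≤ (B - a m) / ρ (m + 1) + (a m - a (m + 1)) / ρ (m + 1) := by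
          rw [sum_range_succ]; linarith
      _ = (B - a (m + 1)) / ρ (m + 1) := by ring

theorem mirror_descent_regret_le {p : ℕ} {h : EuclideanSpace ℝ (Fin p) → ℝ}
    {h' : EuclideanSpace ℝ (Fin p) → EuclideanSpace ℝ (Fin p)}
    (hdiff : ∀ x, HasGradientAt h (h' x) x) (hsc : StrongConvexOn Set.univ 1 h)
    {K : Set (EuclideanSpace ℝ (Fin p))} (hK : Convex ℝ K) {x g : ℕ → EuclideanSpace ℝ (Fin p)}
    {ρ : ℕ → ℝ} {δ R : ℝ} (hxK : ∀ t, x t ∈ K) (hg : ∀ t, ‖g t‖ ≤ R)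
    (hmin : ∀ t, 1 ≤ t → IsMinOn (mirrorObjective h h' (ρ t) (x (t - 1)) (g (t - 1))) K (x t))
    (hD : ∀ x₁ ∈ K, ∀ x₂ ∈ K, Dbreg h h' x₁ x₂ ≤ δ ^ 2)
    (hρpos : ∀ t, 1 ≤ t → 0 < ρ t) (hρmono : ∀ t, 1 ≤ t → ρ (t + 1) ≤ ρ t)
    {t : ℕ} (ht : 1 ≤ t) {x' : EuclideanSpace ℝ (Fin p)} (hx' : x' ∈ K) :
    ∑ u ∈ range t, ⟪g u, x u - x'⟫ ≤ δ ^ 2 / ρ t + R ^ 2 / 2 * ∑ u ∈ Icc 1 t, ρ u := by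
  have hstep : ∀ u, ⟪g u, x u - x'⟫ ≤
      (Dbreg h h' x' (x u) - Dbreg h h' x' (x (u + 1))) / ρ (u + 1) + ρ (u + 1) * R ^ 2 / 2 :=
    fun u => mirror_step_inner_sub_le hdiff hsc hK
      (hρpos (u + 1) (by omega)) (hg u) (hxK (u + 1)) (hmin (u + 1) (by omega)) hx'
  have htel := sum_range_sub_div_le (a := fun u => Dbreg h h' x' (x u))
    (fun u => dbreg_nonneg hdiff hsc x' (x u))
    (fun u => hD x' hx' (x u) (hxK u)) hρpos hρmono ht
  have hsteps : ∑ u ∈ range t, ρ (u + 1) * R ^ 2 / 2 = R ^ 2 / 2 * ∑ u ∈ Icc 1 t, ρ u := by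
    rw [← Ico_add_one_right_eq_Icc, mul_sum, sum_Ico_eq_sum_range, Nat.add_sub_cancel]
    exact sum_congr rfl fun u _ => by rw [add_comm 1 u]; ring
  calc ∑ u ∈ range t, ⟪g u, x u - x'⟫
      ≤ ∑ u ∈ range t, ((Dbreg h h' x' (x u) - Dbreg h h' x' (x (u + 1))) / ρ (u + 1)
          + ρ (u + 1) * R ^ 2 / 2) := sum_le_sum fun u _ => hstep u
    _ ≤ δ ^ 2 / ρ t + R ^ 2 / 2 * ∑ u ∈ Icc 1 t, ρ u := by
      rw [sum_add_distrib, hsteps]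
      exact add_le_add_left htel _

theorem coe_add_fstarE_le {n : ℕ} {f : EuclideanSpace ℝ (Fin n) → ℝ}
    {y : EuclideanSpace ℝ (Fin n)} {c b : ℝ} (hb : ∀ z, c + (⟪y, z⟫ - f z) ≤ b) :
    (c : EReal) + fstarE f y ≤ b := by
  have hsup : fstarE f y ≤ ((b - c : ℝ) : EReal) :=
    iSup_le fun z => EReal.coe_le_coe_iff.2 (by linarith [hb z])
  calc (c : EReal) + fstarE f y ≤ (c : EReal) + ((b - c : ℝ) : EReal) := add_le_add_right hsup _
    _ = b := by rw [← EReal.coe_add, add_sub_cancel]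

theorem gap_le_of_weighted_regret_le {p n : ℕ}
    (A : EuclideanSpace ℝ (Fin p) →L[ℝ] EuclideanSpace ℝ (Fin n))
    {f : EuclideanSpace ℝ (Fin n) → ℝ} (hf : ConvexOn ℝ Set.univ f)
    {K : Set (EuclideanSpace ℝ (Fin p))} {σ : EuclideanSpace ℝ (Fin p) → ℝ}
    (hσ : ∀ z, IsGreatest ((fun x' => ⟪z, x'⟫) '' K) (σ z))
    {ι : Type*} {s : Finset ι} {w : ι → ℝ} (hw₀ : ∀ i ∈ s, 0 ≤ w i) (hw₁ : ∑ i ∈ s, w i = 1)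
    {x : ι → EuclideanSpace ℝ (Fin p)} {y : ι → EuclideanSpace ℝ (Fin n)}
    (hsub : ∀ i ∈ s, IsSubgrad f (A (x i)) (y i)) {ε : ℝ}
    (hreg : ∀ x' ∈ K, ∑ i ∈ s, w i * ⟪(ContinuousLinearMap.adjoint A) (y i), x i - x'⟫ ≤ ε)
    (z : EuclideanSpace ℝ (Fin n)) :
    f (A (∑ i ∈ s, w i • x i)) + σ (-(ContinuousLinearMap.adjoint A) (∑ i ∈ s, w i • y i)) +
      (⟪∑ i ∈ s, w i • y i, z⟫ - f z) ≤ ε := by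
  set A' := ContinuousLinearMap.adjoint A
  obtain ⟨xσ, hxσK, hxσ⟩ := (hσ (-A' (∑ i ∈ s, w i • y i))).1
  have hjensen : f (A (∑ i ∈ s, w i • x i)) ≤ ∑ i ∈ s, w i * f (A (x i)) := by
    simpa only [map_sum, map_smul, smul_eq_mul] using
      hf.map_sum_le hw₀ hw₁ fun i _ => Set.mem_univ (A (x i))
  have hsupport : σ (-A' (∑ i ∈ s, w i • y i)) = -∑ i ∈ s, w i * ⟪A' (y i), xσ⟫ := by
    rw [← hxσ]
    simp only [map_sum, map_smul, inner_neg_left, sum_inner, real_inner_smul_left]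
  have hconj : ⟪∑ i ∈ s, w i • y i, z⟫ - f z ≤ ∑ i ∈ s, w i * (⟪A' (y i), x i⟫ - f (A (x i))) := by
    calc ⟪∑ i ∈ s, w i • y i, z⟫ - f z = ∑ i ∈ s, w i * (⟪y i, z⟫ - f z) := by
          simp only [sum_inner, real_inner_smul_left, mul_sub, sum_sub_distrib, ← sum_mul, hw₁,
            one_mul]
      _ ≤ ∑ i ∈ s, w i * (⟪A' (y i), x i⟫ - f (A (x i))) := by
          refine sum_le_sum fun i hi => mul_le_mul_of_nonneg_left ?_ (hw₀ i hi)
          have hsubi := hsub i hi z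
          rw [inner_sub_right] at hsubi
          rw [ContinuousLinearMap.adjoint_inner_left]
          linarith
  have hcollect : ∑ i ∈ s, w i * f (A (x i)) - ∑ i ∈ s, w i * ⟪A' (y i), xσ⟫ +
      ∑ i ∈ s, w i * (⟪A' (y i), x i⟫ - f (A (x i))) = ∑ i ∈ s, w i * ⟪A' (y i), x i - xσ⟫ := by
    rw [← sum_sub_distrib, ← sum_add_distrib]
    exact sum_congr rfl fun i _ => by rw [inner_sub_right]; ring
  linarith [hreg xσ hxσK]

theorem mirror_descent_averaged_gap_general {p n : ℕ}
    (A : EuclideanSpace ℝ (Fin p) →L[ℝ] EuclideanSpace ℝ (Fin n))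
    (f : EuclideanSpace ℝ (Fin n) → ℝ)
    (hf : ConvexOn ℝ Set.univ f)
    (K : Set (EuclideanSpace ℝ (Fin p)))
    (hKconv : Convex ℝ K)
    (h : EuclideanSpace ℝ (Fin p) → ℝ)
    (h' : EuclideanSpace ℝ (Fin p) → EuclideanSpace ℝ (Fin p))
    (hdiff : ∀ x, HasGradientAt h (h' x) x)
    (hsc : StrongConvexOn Set.univ 1 h)
    (x : ℕ → EuclideanSpace ℝ (Fin p))
    (y : ℕ → EuclideanSpace ℝ (Fin n))
    (ρ : ℕ → ℝ)
    (hxK : ∀ t, x t ∈ K)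
    (hsub : ∀ t, IsSubgrad f (A (x t)) (y t))
    (hmin : ∀ t, 1 ≤ t → ∀ x' ∈ K,
      1 / ρ t * Dbreg h h' (x t) (x (t - 1)) +
          ⟪x t - x (t - 1), (ContinuousLinearMap.adjoint A) (y (t - 1))⟫ ≤
        1 / ρ t * Dbreg h h' x' (x (t - 1)) +
          ⟪x' - x (t - 1), (ContinuousLinearMap.adjoint A) (y (t - 1))⟫)
    (δ : ℝ)
    (hD : ∀ x₁ ∈ K, ∀ x₂ ∈ K, Dbreg h h' x₁ x₂ ≤ δ ^ 2)
    (R : ℝ)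
    (hR : ∀ z y', IsSubgrad f z y' → ‖(ContinuousLinearMap.adjoint A) y'‖ ≤ R)
    (σ : EuclideanSpace ℝ (Fin p) → ℝ)
    (hσ : ∀ z, IsGreatest ((fun x' => ⟪z, x'⟫) '' K) (σ z))
    (hρpos : ∀ t, 1 ≤ t → 0 < ρ t)
    (hρmono : ∀ t, 1 ≤ t → ρ (t + 1) ≤ ρ t) :
    ∀ t : ℕ, 1 ≤ t →
      ((f (A ((1 / (t : ℝ)) • ∑ u ∈ range t, x u)) +
          σ (-((ContinuousLinearMap.adjoint A) ((1 / (t : ℝ)) • ∑ u ∈ range t, y u))) : ℝ)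
          : EReal) +
        fstarE f ((1 / (t : ℝ)) • ∑ u ∈ range t, y u) ≤
      ((δ ^ 2 / ((t : ℝ) * ρ t) + R ^ 2 / (2 * (t : ℝ)) * ∑ u ∈ Finset.Icc 1 t, ρ u : ℝ)
          : EReal) := by
  intro t ht
  have ht₀ : (0 : ℝ) < t := by exact_mod_cast ht
  have hregret := fun x' (hx' : x' ∈ K) => mirror_descent_regret_le hdiff hsc hKconv hxK
    (fun u => hR _ _ (hsub u)) (fun t ht => isMinOn_iff.2 (hmin t ht)) hD hρpos hρmono ht hx'
  simp only [smul_sum]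
  refine coe_add_fstarE_le fun z => gap_le_of_weighted_regret_le A hf hσ
    (fun _ _ => by positivity) (by simp [ht₀.ne']) (fun u _ => hsub u) (fun x' hx' => ?_) z
  rw [← mul_sum]
  calc 1 / (t : ℝ) * _ ≤ 1 / t * (δ ^ 2 / ρ t + R ^ 2 / 2 * ∑ u ∈ Icc 1 t, ρ u) := by
        gcongr; exact hregret x' hx'
    _ = _ := by ring

/-- Primal-dual convergence of averaged mirror descent iterates over a compact set, for
positive nonincreasing step sizes. -/
theorem mirror_descent_averaged_gap {p n : ℕ}
    (A : EuclideanSpace ℝ (Fin p) →L[ℝ] EuclideanSpace ℝ (Fin n))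
    (f : EuclideanSpace ℝ (Fin n) → ℝ)
    (hf : ConvexOn ℝ Set.univ f)
    (K : Set (EuclideanSpace ℝ (Fin p)))
    (hKcpt : IsCompact K) (hKconv : Convex ℝ K)
    (h : EuclideanSpace ℝ (Fin p) → ℝ)
    (h' : EuclideanSpace ℝ (Fin p) → EuclideanSpace ℝ (Fin p))
    (hdiff : ∀ x, HasGradientAt h (h' x) x)
    (hsc : StrongConvexOn Set.univ 1 h)
    (x : ℕ → EuclideanSpace ℝ (Fin p))
    (y : ℕ → EuclideanSpace ℝ (Fin n))
    (ρ : ℕ → ℝ)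
    (hxK : ∀ t, x t ∈ K)
    (hsub : ∀ t, IsSubgrad f (A (x t)) (y t))
    (hmin : ∀ t, 1 ≤ t → ∀ x' ∈ K,
      1 / ρ t * Dbreg h h' (x t) (x (t - 1)) +
          ⟪x t - x (t - 1), (ContinuousLinearMap.adjoint A) (y (t - 1))⟫ ≤
        1 / ρ t * Dbreg h h' x' (x (t - 1)) +
          ⟪x' - x (t - 1), (ContinuousLinearMap.adjoint A) (y (t - 1))⟫)
    (δ : ℝ)
    (hD : ∀ x₁ ∈ K, ∀ x₂ ∈ K, Dbreg h h' x₁ x₂ ≤ δ ^ 2)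
    (R : ℝ)
    (hR : ∀ z y', IsSubgrad f z y' → ‖(ContinuousLinearMap.adjoint A) y'‖ ≤ R)
    (σ : EuclideanSpace ℝ (Fin p) → ℝ)
    (hσ : ∀ z, IsGreatest ((fun x' => ⟪z, x'⟫) '' K) (σ z))
    (hδ0 : 0 ≤ δ) (hR0 : 0 ≤ R)
    (hρpos : ∀ t, 1 ≤ t → 0 < ρ t)
    (hρmono : ∀ t, 1 ≤ t → ρ (t + 1) ≤ ρ t) :
    ∀ t : ℕ, 1 ≤ t →
      ((f (A ((1 / (t : ℝ)) • ∑ u ∈ range t, x u)) +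
          σ (-((ContinuousLinearMap.adjoint A) ((1 / (t : ℝ)) • ∑ u ∈ range t, y u))) : ℝ)
          : EReal) +
        fstarE f ((1 / (t : ℝ)) • ∑ u ∈ range t, y u) ≤
      ((δ ^ 2 / ((t : ℝ) * ρ t) + R ^ 2 / (2 * (t : ℝ)) * ∑ u ∈ Finset.Icc 1 t, ρ u : ℝ)
          : EReal) :=
  mirror_descent_averaged_gap_general A f hf K hKconv h h' hdiff hsc x y ρ hxK hsub hmin δ hD R hR σ
    hσ hρpos hρmono
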